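/- Let (X(n))_{n≥0} = (X₁(n), X₂(n)) be a time-homogeneous Markov chain on ℤ₊^k × ℤ₊^m with transition kernel Q, and let N ≥ 0 be a fixed integer. Assume: (1) for every initial state, almost surely every coordinate of X₂(n) tends to +∞ as n → ∞; (2') there exist a stochastic matrix P = (P_{i,j}) on ℤ₊^k and a probability distribution π on ℤ₊^k such that for every i, sup_j |P^n(i,j) − π_j| → 0 as n → ∞, and such that ℙ(X₁(n+1)=j | X₁(n)=i, X₂(n)=l) = P_{i,j} for all i, j and all l ∈ ℤ₊^m with every coordinate l_r > N. Then for every initial state, sup_j |ℙ(X₁(n) = j) − π_j| → 0 as n → ∞, i.e. X₁(n) converges to π in total variation. -/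

import Mathlib

open MeasureTheory Filter Topology Classical

/-- `n`-step transition probabilities of a transition matrix `P` on a countable set. -/
noncomputable def matPow {I : Type*} (P : I → I → ℝ) : ℕ → I → I → ℝ
  | 0 => fun i j => if i = j then 1 else 0
  | n + 1 => fun i j => ∑' x, matPow P n i x * P x j

/-- `P` is a stochastic matrix: nonnegative entries with rows summing to `1`. -/
def IsStochasticMatrix {I : Type*} (P : I → I → ℝ) : Prop :=
  (∀ i j, 0 ≤ P i j) ∧ ∀ i, HasSum (P i) 1

/-- `π` is a probability distribution on a countable set. -/
def IsProbabilityVector {I : Type*} (π : I → ℝ) : Prop :=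
  (∀ j, 0 ≤ π j) ∧ HasSum π 1

/-- `X` is a time-homogeneous Markov chain with transition kernel `Q` under `μ`:
for every finite path and every next state `y`, the probability of following the path and
then moving to `y` equals `Q` at the path's endpoint times the probability of the path
(this is the usual conditional-probability formulation, valid also when the conditioning
event has probability zero). -/
def IsMarkovChainKernel {Ω S : Type*} [MeasurableSpace Ω]
    (μ : Measure Ω) (X : ℕ → Ω → S) (Q : S → S → ℝ) : Prop :=
  ∀ (n : ℕ) (path : ℕ → S) (y : S),
    (μ {ω | (∀ i ≤ n, X i ω = path i) ∧ X (n + 1) ω = y}).toReal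
      = Q (path n) y * (μ {ω | ∀ i ≤ n, X i ω = path i}).toReal


open scoped ENNReal

set_option linter.unusedSectionVars false

noncomputable def ematPow {I : Type*} (P : I → I → ℝ≥0∞) : ℕ → I → I → ℝ≥0∞
  | 0 => fun i j => if i = j then 1 else 0
  | n + 1 => fun i j => ∑' x, ematPow P n i x * P x j

section A
variable {I : Type*} {P : I → I → ℝ}

lemma aux_row (hP : IsStochasticMatrix P) (i : I) :
    ∑' j, ENNReal.ofReal (P i j) = 1 := by
  rw [← ENNReal.ofReal_tsum_of_nonneg (hP.1 i) (hP.2 i).summable, (hP.2 i).tsum_eq,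
    ENNReal.ofReal_one]

lemma aux_ematPow_row (hP : IsStochasticMatrix P) (n : ℕ) (i : I) :
    ∑' j, ematPow (fun a b => ENNReal.ofReal (P a b)) n i j = 1 := by
  induction n generalizing i with
  | zero =>
    have : ∀ j, ematPow (fun a b => ENNReal.ofReal (P a b)) 0 i j
        = if j = i then (1 : ℝ≥0∞) else 0 := by
      intro j; simp [ematPow, eq_comm]
    rw [tsum_congr this, tsum_ite_eq]
  | succ n ih =>
    show ∑' j, ∑' x, ematPow _ n i x * ENNReal.ofReal (P x j) = 1
    rw [ENNReal.tsum_comm]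
    calc ∑' x, ∑' j, ematPow (fun a b => ENNReal.ofReal (P a b)) n i x * ENNReal.ofReal (P x j)
        = ∑' x, ematPow (fun a b => ENNReal.ofReal (P a b)) n i x * ∑' j, ENNReal.ofReal (P x j) := by
          simp [ENNReal.tsum_mul_left]
      _ = 1 := by simp [aux_row hP, ih]

lemma aux_ematPow_le_one (hP : IsStochasticMatrix P) (n : ℕ) (i j : I) :
    ematPow (fun a b => ENNReal.ofReal (P a b)) n i j ≤ 1 :=
  (ENNReal.le_tsum j).trans (aux_ematPow_row hP n i).le

lemma aux_bridge (hP : IsStochasticMatrix P) (n : ℕ) (i j : I) :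
    (ematPow (fun a b => ENNReal.ofReal (P a b)) n i j).toReal = matPow P n i j := by
  induction n generalizing i j with
  | zero => by_cases h : i = j <;> simp [ematPow, matPow, h]
  | succ n ih =>
    show (∑' x, ematPow _ n i x * ENNReal.ofReal (P x j)).toReal = ∑' x, matPow P n i x * P x j
    rw [ENNReal.tsum_toReal_eq]
    · refine tsum_congr fun x => ?_
      rw [ENNReal.toReal_mul, ih, ENNReal.toReal_ofReal (hP.1 x j)]
    · intro x
      exact ENNReal.mul_ne_top (ne_top_of_le_ne_top ENNReal.one_ne_top (aux_ematPow_le_one hP n i x))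
        ENNReal.ofReal_ne_top

lemma aux_matPow_nonneg (hP : IsStochasticMatrix P) (n : ℕ) (i j : I) : 0 ≤ matPow P n i j := by
  rw [← aux_bridge hP]; exact ENNReal.toReal_nonneg

lemma aux_matPow_le_one (hP : IsStochasticMatrix P) (n : ℕ) (i j : I) : matPow P n i j ≤ 1 := by
  rw [← aux_bridge hP]
  exact ENNReal.toReal_le_of_le_ofReal one_pos.le (by simpa using aux_ematPow_le_one hP n i j)

end A

lemma aux_partition {Ω β : Type*} [MeasurableSpace Ω] (μ : Measure Ω)
    [Countable β] [MeasurableSpace β] [MeasurableSingletonClass β]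
    {g : Ω → β} (hg : Measurable g) {B : Set Ω} (hB : MeasurableSet B) :
    μ B = ∑' v, μ (B ∩ g ⁻¹' {v}) := by
  have hU : B = ⋃ v, B ∩ g ⁻¹' {v} := by
    ext ω; simp
  conv_lhs => rw [hU]
  rw [measure_iUnion]
  · intro v v' hvv'
    simp only [Function.onFun, Set.disjoint_left]
    rintro ω ⟨-, h1⟩ ⟨-, h2⟩
    simp only [Set.mem_preimage, Set.mem_singleton_iff] at h1 h2
    exact hvv' (h1 ▸ h2 ▸ rfl)
  · exact fun v => hB.inter (hg (measurableSet_singleton v))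

section B
variable {k m : ℕ} {Ω : Type*} [MeasurableSpace Ω]

-- every subset of the countable state space is measurable
lemma aux_Smeas (B : Set ((Fin k → ℕ) × (Fin m → ℕ))) : MeasurableSet B :=
  B.to_countable.measurableSet

variable (μ : Measure Ω) [IsProbabilityMeasure μ]
  (X : ℕ → Ω → (Fin k → ℕ) × (Fin m → ℕ)) (hXmeas : ∀ n, Measurable (X n))
  (Q : ((Fin k → ℕ) × (Fin m → ℕ)) → ((Fin k → ℕ) × (Fin m → ℕ)) → ℝ)

lemma aux_hist_meas (hXmeas : ∀ n, Measurable (X n)) (t : ℕ) :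
    Measurable (fun ω (u : Fin (t + 1)) => X u ω) :=
  measurable_pi_lambda _ fun u => hXmeas u

/-- The atom identity from the Markov property, ENNReal version. -/
lemma aux_atom (hQ0 : ∀ a b, 0 ≤ Q a b) (hmc : IsMarkovChainKernel μ X Q)
    (t : ℕ) (q : Fin (t + 1) → (Fin k → ℕ) × (Fin m → ℕ)) (y : (Fin k → ℕ) × (Fin m → ℕ)) :
    μ ((fun ω (u : Fin (t + 1)) => X u ω) ⁻¹' {q} ∩ X (t + 1) ⁻¹' {y})
      = ENNReal.ofReal (Q (q (Fin.last t)) y) * μ ((fun ω (u : Fin (t + 1)) => X u ω) ⁻¹' {q}) := by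
  set path : ℕ → (Fin k → ℕ) × (Fin m → ℕ) :=
    fun u => if h : u ≤ t then q ⟨u, Nat.lt_succ_of_le h⟩ else q (Fin.last t) with hpath
  have hE1 : (fun ω (u : Fin (t + 1)) => X u ω) ⁻¹' {q} = {ω | ∀ i ≤ t, X i ω = path i} := by
    ext ω
    simp only [Set.mem_preimage, Set.mem_singleton_iff, funext_iff, Set.mem_setOf_eq]
    constructor
    · intro h u hu
      simpa [hpath, hu] using h ⟨u, Nat.lt_succ_of_le hu⟩
    · intro h u
      have := h u (Nat.lt_succ_iff.1 u.2)
      simpa [hpath, Nat.lt_succ_iff.1 u.2] using this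
  have hpt : path t = q (Fin.last t) := by simp [hpath, Fin.last]
  have hE2 : (fun ω (u : Fin (t + 1)) => X u ω) ⁻¹' {q} ∩ X (t + 1) ⁻¹' {y}
      = {ω | (∀ i ≤ t, X i ω = path i) ∧ X (t + 1) ω = y} := by
    rw [hE1]; ext ω; simp [Set.mem_preimage]
  have := hmc t path y
  rw [hpt] at this
  rw [hE2, hE1]
  calc μ {ω | (∀ i ≤ t, X i ω = path i) ∧ X (t + 1) ω = y}
      = ENNReal.ofReal ((μ {ω | (∀ i ≤ t, X i ω = path i) ∧ X (t + 1) ω = y}).toReal) :=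
        (ENNReal.ofReal_toReal (measure_ne_top _ _)).symm
    _ = ENNReal.ofReal (Q (q (Fin.last t)) y * (μ {ω | ∀ i ≤ t, X i ω = path i}).toReal) := by
        rw [this]
    _ = ENNReal.ofReal (Q (q (Fin.last t)) y) * μ {ω | ∀ i ≤ t, X i ω = path i} := by
        rw [ENNReal.ofReal_mul (hQ0 _ _), ENNReal.ofReal_toReal (measure_ne_top _ _)]

lemma aux_ofReal_of_toReal {a b : ℝ≥0∞} {c : ℝ} (hc : 0 ≤ c) (ha : a ≠ ⊤) (hb : b ≠ ⊤)
    (h : a.toReal = c * b.toReal) : a = ENNReal.ofReal c * b := by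
  rw [← ENNReal.ofReal_toReal ha, h, ENNReal.ofReal_mul hc, ENNReal.ofReal_toReal hb]

lemma aux_atom_sub (t : ℕ) (q : Fin (t + 1) → (Fin k → ℕ) × (Fin m → ℕ)) :
    (fun ω (u : Fin (t + 1)) => X u ω) ⁻¹' {q} ⊆ X t ⁻¹' {q (Fin.last t)} := by
  intro ω h
  simp only [Set.mem_preimage, Set.mem_singleton_iff] at h ⊢
  have := congrFun h (Fin.last t)
  simpa using this

/-- The state-level identity from the Markov property. -/
lemma aux_state (hXmeas : ∀ n, Measurable (X n)) (hQ0 : ∀ a b, 0 ≤ Q a b)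
    (hmc : IsMarkovChainKernel μ X Q)
    (t : ℕ) (v y : (Fin k → ℕ) × (Fin m → ℕ)) :
    μ (X t ⁻¹' {v} ∩ X (t + 1) ⁻¹' {y})
      = ENNReal.ofReal (Q v y) * μ (X t ⁻¹' {v}) := by
  have hmeasB : ∀ B : Set ((Fin k → ℕ) × (Fin m → ℕ)), ∀ n, MeasurableSet (X n ⁻¹' B) :=
    fun B n => (hXmeas n) (aux_Smeas B)
  have hper : ∀ q : Fin (t + 1) → (Fin k → ℕ) × (Fin m → ℕ),
      μ ((X t ⁻¹' {v} ∩ X (t + 1) ⁻¹' {y}) ∩ (fun ω (u : Fin (t + 1)) => X u ω) ⁻¹' {q})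
        = ENNReal.ofReal (Q v y) * μ (X t ⁻¹' {v} ∩ (fun ω (u : Fin (t + 1)) => X u ω) ⁻¹' {q}) := by
    intro q
    by_cases hqv : q (Fin.last t) = v
    · have e1 : X t ⁻¹' {v} ∩ (fun ω (u : Fin (t + 1)) => X u ω) ⁻¹' {q}
          = (fun ω (u : Fin (t + 1)) => X u ω) ⁻¹' {q} :=
        Set.inter_eq_right.2 (by rw [← hqv]; exact aux_atom_sub X t q)
      have e2 : (X t ⁻¹' {v} ∩ X (t + 1) ⁻¹' {y}) ∩ (fun ω (u : Fin (t + 1)) => X u ω) ⁻¹' {q}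
          = (fun ω (u : Fin (t + 1)) => X u ω) ⁻¹' {q} ∩ X (t + 1) ⁻¹' {y} := by
        have hsub : (fun ω (u : Fin (t + 1)) => X u ω) ⁻¹' {q} ⊆ X t ⁻¹' {v} := by
          rw [← hqv]; exact aux_atom_sub X t q
        ext ω
        constructor
        · rintro ⟨⟨_, h2⟩, h3⟩; exact ⟨h3, h2⟩
        · rintro ⟨h3, h2⟩; exact ⟨⟨hsub h3, h2⟩, h3⟩
      rw [e1, e2, aux_atom μ X Q hQ0 hmc t q y, hqv]
    · have e0 : X t ⁻¹' {v} ∩ (fun ω (u : Fin (t + 1)) => X u ω) ⁻¹' {q} = ∅ := by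
        apply Set.eq_empty_iff_forall_notMem.2
        rintro ω ⟨h1, h2⟩
        exact hqv (by
          have := aux_atom_sub X t q h2
          simp only [Set.mem_preimage, Set.mem_singleton_iff] at this h1
          rw [← this, h1])
      have e0' : (X t ⁻¹' {v} ∩ X (t + 1) ⁻¹' {y}) ∩ (fun ω (u : Fin (t + 1)) => X u ω) ⁻¹' {q} = ∅ := by
        rw [Set.inter_right_comm, e0, Set.empty_inter]
      rw [e0, e0', measure_empty, mul_zero]
  rw [aux_partition μ (aux_hist_meas X hXmeas t)
      (((hmeasB {v} t).inter (hmeasB {y} (t+1)))),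
    tsum_congr hper, ENNReal.tsum_mul_left,
    ← aux_partition μ (aux_hist_meas X hXmeas t) (hmeasB {v} t)]

/-- Row-sum identity for the kernel `Q` over the second component. -/
lemma aux_qrow (hXmeas : ∀ n, Measurable (X n)) (hQ0 : ∀ a b, 0 ≤ Q a b)
    (hmc : IsMarkovChainKernel μ X Q)
    (N : ℕ) (P : (Fin k → ℕ) → (Fin k → ℕ) → ℝ) (hP0 : ∀ i j, 0 ≤ P i j)
    (h2 : ∀ (n : ℕ) (i j : Fin k → ℕ) (l : Fin m → ℕ), (∀ r, N < l r) →
      (μ {ω | X n ω = (i, l) ∧ (X (n + 1) ω).1 = j}).toReal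
        = P i j * (μ {ω | X n ω = (i, l)}).toReal)
    (t : ℕ) (i j : Fin k → ℕ) (l : Fin m → ℕ) (hl : ∀ r, N < l r)
    (hpos : μ (X t ⁻¹' {(i, l)}) ≠ 0) :
    ∑' l' : Fin m → ℕ, ENNReal.ofReal (Q (i, l) (j, l')) = ENNReal.ofReal (P i j) := by
  have hmeasB : ∀ B : Set ((Fin k → ℕ) × (Fin m → ℕ)), ∀ n, MeasurableSet (X n ⁻¹' B) :=
    fun B n => (hXmeas n) (aux_Smeas B)
  set B : Set Ω := {ω | X t ω = (i, l) ∧ (X (t + 1) ω).1 = j} with hB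
  have hBU : B = ⋃ l' : Fin m → ℕ, (X t ⁻¹' {(i, l)} ∩ X (t + 1) ⁻¹' {(j, l')}) := by
    ext ω
    simp only [hB, Set.mem_setOf_eq, Set.mem_iUnion, Set.mem_inter_iff, Set.mem_preimage,
      Set.mem_singleton_iff]
    constructor
    · rintro ⟨h1, h2⟩
      exact ⟨(X (t + 1) ω).2, h1, by rw [← h2]⟩
    · rintro ⟨l', h1, h2⟩
      exact ⟨h1, by rw [h2]⟩
  have hμB : μ B = (∑' l' : Fin m → ℕ, ENNReal.ofReal (Q (i, l) (j, l'))) * μ (X t ⁻¹' {(i, l)}) := by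
    rw [hBU, measure_iUnion, tsum_congr (fun l' => aux_state μ X Q hXmeas hQ0 hmc t (i, l) (j, l')),
      ENNReal.tsum_mul_right]
    · intro a b hab
      simp only [Function.onFun, Set.disjoint_left]
      rintro ω ⟨-, h1⟩ ⟨-, h2⟩
      simp only [Set.mem_preimage, Set.mem_singleton_iff] at h1 h2
      exact hab (congrArg Prod.snd (h1.symm.trans h2))
    · exact fun l' => (hmeasB _ t).inter (hmeasB _ (t + 1))
  have hμB' : μ B = ENNReal.ofReal (P i j) * μ (X t ⁻¹' {(i, l)}) := by
    apply aux_ofReal_of_toReal (hP0 i j) (measure_ne_top _ _) (measure_ne_top _ _)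
    have := h2 t i j l hl
    have hset : {ω | X t ω = (i, l)} = X t ⁻¹' {(i, l)} := rfl
    rw [← hset]
    exact this
  rw [hμB] at hμB'
  exact (ENNReal.mul_left_inj hpos (measure_ne_top _ _)).1 hμB'

/-- Key step lemma: on a cylinder event whose endpoint has first component `i` and all
second components `> N`, the first component makes a `P`-transition. -/
lemma aux_step (hXmeas : ∀ n, Measurable (X n)) (hQ0 : ∀ a b, 0 ≤ Q a b)
    (hmc : IsMarkovChainKernel μ X Q)
    (N : ℕ) (P : (Fin k → ℕ) → (Fin k → ℕ) → ℝ) (hP0 : ∀ i j, 0 ≤ P i j)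
    (h2 : ∀ (n : ℕ) (i j : Fin k → ℕ) (l : Fin m → ℕ), (∀ r, N < l r) →
      (μ {ω | X n ω = (i, l) ∧ (X (n + 1) ω).1 = j}).toReal
        = P i j * (μ {ω | X n ω = (i, l)}).toReal)
    (t : ℕ) (i j : Fin k → ℕ)
    (A : Set (Fin (t + 1) → (Fin k → ℕ) × (Fin m → ℕ)))
    (hA : ∀ q ∈ A, (q (Fin.last t)).1 = i ∧ ∀ r, N < (q (Fin.last t)).2 r) :
    μ ((fun ω (u : Fin (t + 1)) => X u ω) ⁻¹' A ∩ {ω | (X (t + 1) ω).1 = j})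
      = ENNReal.ofReal (P i j) * μ ((fun ω (u : Fin (t + 1)) => X u ω) ⁻¹' A) := by
  have hmeasB : ∀ B : Set ((Fin k → ℕ) × (Fin m → ℕ)), ∀ n, MeasurableSet (X n ⁻¹' B) :=
    fun B n => (hXmeas n) (aux_Smeas B)
  have hH := aux_hist_meas X hXmeas t
  have hAm : MeasurableSet ((fun ω (u : Fin (t + 1)) => X u ω) ⁻¹' A) :=
    hH (A.to_countable.measurableSet)
  have hZj : {ω | (X (t + 1) ω).1 = j} = X (t + 1) ⁻¹' {v | v.1 = j} := rfl
  have hZm : MeasurableSet {ω | (X (t + 1) ω).1 = j} := hmeasB {v | v.1 = j} (t + 1)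
  -- the per-atom computation
  have hatom : ∀ q : Fin (t + 1) → (Fin k → ℕ) × (Fin m → ℕ), q ∈ A →
      μ ((fun ω (u : Fin (t + 1)) => X u ω) ⁻¹' {q} ∩ {ω | (X (t + 1) ω).1 = j})
        = ENNReal.ofReal (P i j) * μ ((fun ω (u : Fin (t + 1)) => X u ω) ⁻¹' {q}) := by
    intro q hq
    obtain ⟨hq1, hq2⟩ := hA q hq
    set e := q (Fin.last t) with he
    by_cases hpos : μ (X t ⁻¹' {e}) = 0
    · have h0 : μ ((fun ω (u : Fin (t + 1)) => X u ω) ⁻¹' {q}) = 0 :=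
        le_antisymm (le_trans (measure_mono (aux_atom_sub X t q)) hpos.le) (zero_le)
      rw [h0, mul_zero]
      exact le_antisymm (le_trans (measure_mono Set.inter_subset_left) h0.le) (zero_le)
    · have hUq : (fun ω (u : Fin (t + 1)) => X u ω) ⁻¹' {q} ∩ {ω | (X (t + 1) ω).1 = j}
          = ⋃ l' : Fin m → ℕ,
            ((fun ω (u : Fin (t + 1)) => X u ω) ⁻¹' {q} ∩ X (t + 1) ⁻¹' {(j, l')}) := by
        ext ω
        simp only [Set.mem_inter_iff, Set.mem_preimage, Set.mem_singleton_iff, Set.mem_setOf_eq,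
          Set.mem_iUnion]
        constructor
        · rintro ⟨h1, h2⟩
          exact ⟨(X (t + 1) ω).2, h1, by rw [← h2]⟩
        · rintro ⟨l', h1, h2⟩
          exact ⟨h1, by rw [h2]⟩
      have he2 : e = (i, e.2) := by rw [← hq1]
      rw [hUq, measure_iUnion, tsum_congr (fun l' => aux_atom μ X Q hQ0 hmc t q (j, l')),
        ENNReal.tsum_mul_right, ← he]
      · congr 1
        rw [he2] at hpos ⊢
        exact aux_qrow μ X Q hXmeas hQ0 hmc N P hP0 h2 t i j e.2 hq2 hpos
      · intro a b hab
        simp only [Function.onFun, Set.disjoint_left]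
        rintro ω ⟨-, h1⟩ ⟨-, h2⟩
        simp only [Set.mem_preimage, Set.mem_singleton_iff] at h1 h2
        exact hab (congrArg Prod.snd (h1.symm.trans h2))
      · exact fun l' => (hH (measurableSet_singleton q)).inter (hmeasB _ (t + 1))
  -- now partition over histories
  have hper : ∀ q : Fin (t + 1) → (Fin k → ℕ) × (Fin m → ℕ),
      μ (((fun ω (u : Fin (t + 1)) => X u ω) ⁻¹' A ∩ {ω | (X (t + 1) ω).1 = j})
          ∩ (fun ω (u : Fin (t + 1)) => X u ω) ⁻¹' {q})
        = ENNReal.ofReal (P i j)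
          * μ ((fun ω (u : Fin (t + 1)) => X u ω) ⁻¹' A ∩ (fun ω (u : Fin (t + 1)) => X u ω) ⁻¹' {q}) := by
    intro q
    by_cases hq : q ∈ A
    · have e1 : (fun ω (u : Fin (t + 1)) => X u ω) ⁻¹' A ∩ (fun ω (u : Fin (t + 1)) => X u ω) ⁻¹' {q}
          = (fun ω (u : Fin (t + 1)) => X u ω) ⁻¹' {q} := by
        apply Set.inter_eq_right.2
        intro ω hω
        simp only [Set.mem_preimage, Set.mem_singleton_iff] at hω
        simpa [Set.mem_preimage, hω] using hq
      have e2 : ((fun ω (u : Fin (t + 1)) => X u ω) ⁻¹' A ∩ {ω | (X (t + 1) ω).1 = j})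
            ∩ (fun ω (u : Fin (t + 1)) => X u ω) ⁻¹' {q}
          = (fun ω (u : Fin (t + 1)) => X u ω) ⁻¹' {q} ∩ {ω | (X (t + 1) ω).1 = j} := by
        have hsub : (fun ω (u : Fin (t + 1)) => X u ω) ⁻¹' {q}
            ⊆ (fun ω (u : Fin (t + 1)) => X u ω) ⁻¹' A := by
          intro ω hω
          simp only [Set.mem_preimage, Set.mem_singleton_iff] at hω
          simpa [Set.mem_preimage, hω] using hq
        ext ω
        constructor
        · rintro ⟨⟨_, h2⟩, h3⟩; exact ⟨h3, h2⟩
        · rintro ⟨h3, h2⟩; exact ⟨⟨hsub h3, h2⟩, h3⟩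
      rw [e1, e2, hatom q hq]
    · have e0 : (fun ω (u : Fin (t + 1)) => X u ω) ⁻¹' A ∩ (fun ω (u : Fin (t + 1)) => X u ω) ⁻¹' {q}
          = ∅ := by
        apply Set.eq_empty_iff_forall_notMem.2
        rintro ω ⟨h1, h2⟩
        simp only [Set.mem_preimage, Set.mem_singleton_iff] at h1 h2
        rw [h2] at h1
        exact hq h1
      have e0' : ((fun ω (u : Fin (t + 1)) => X u ω) ⁻¹' A ∩ {ω | (X (t + 1) ω).1 = j})
            ∩ (fun ω (u : Fin (t + 1)) => X u ω) ⁻¹' {q} = ∅ := by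
        rw [Set.inter_right_comm, e0, Set.empty_inter]
      rw [e0, e0', measure_empty, mul_zero]
  rw [aux_partition μ hH (hAm.inter hZm), tsum_congr hper, ENNReal.tsum_mul_left,
    ← aux_partition μ hH hAm]

end B

/-- **Local stability in a transient Markov chain**, version with threshold `N`
(Remark 3 of Adan–Foss–Shneer–Weiss). If `X = (X₁, X₂)` is a Markov chain on
`ℤ₊^k × ℤ₊^m` such that (1) from every initial state, almost surely every coordinate of
`X₂(n) → ∞`, and (2') conditionally on `X₂(n) = l` with every coordinate `l_r > N`,
`X₁` makes a transition according to an ergodic stochastic matrix `P` with stationary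
distribution `π`, then from every initial state the distribution of `X₁(n)` converges to
`π` in total variation. -/
theorem local_stability_transient_markov_chain_threshold
    {k m : ℕ} (N : ℕ) {Ω : Type*} [MeasurableSpace Ω]
    (μ : Measure Ω) [IsProbabilityMeasure μ]
    (X : ℕ → Ω → (Fin k → ℕ) × (Fin m → ℕ))
    (hXmeas : ∀ n, Measurable (X n))
    (Q : ((Fin k → ℕ) × (Fin m → ℕ)) → ((Fin k → ℕ) × (Fin m → ℕ)) → ℝ)
    (hQ : IsStochasticMatrix Q)
    (hmc : IsMarkovChainKernel μ X Q)
    (P : (Fin k → ℕ) → (Fin k → ℕ) → ℝ) (π : (Fin k → ℕ) → ℝ)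
    (hP : IsStochasticMatrix P) (hπ : IsProbabilityVector π)
    -- `P` is ergodic with unique stationary distribution `π`:
    (hErg : ∀ i : Fin k → ℕ,
      Tendsto (fun n => ⨆ j : Fin k → ℕ, |matPow P n i j - π j|) atTop (𝓝 0))
    -- (1) for every initial state, a.s. every coordinate of `X₂(n)` tends to `∞`:
    (h1 : ∀ s : (Fin k → ℕ) × (Fin m → ℕ), 0 < μ {ω | X 0 ω = s} →
      μ ({ω | ¬ ∀ r : Fin m, Tendsto (fun n => (X n ω).2 r) atTop atTop}
        ∩ {ω | X 0 ω = s}) = 0)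
    -- (2') conditionally on `X₂(n) = l` with all coordinates `> N`,
    -- `X₁` moves according to `P`:
    (h2 : ∀ (n : ℕ) (i j : Fin k → ℕ) (l : Fin m → ℕ), (∀ r, N < l r) →
      (μ {ω | X n ω = (i, l) ∧ (X (n + 1) ω).1 = j}).toReal
        = P i j * (μ {ω | X n ω = (i, l)}).toReal) :
    -- conclusion: for every initial state, `X₁(n)` converges to `π` in total variation
    ∀ s : (Fin k → ℕ) × (Fin m → ℕ), 0 < μ {ω | X 0 ω = s} →
      Tendsto (fun n => ⨆ j : Fin k → ℕ,
          |(μ {ω | (X n ω).1 = j ∧ X 0 ω = s}).toReal / (μ {ω | X 0 ω = s}).toReal - π j|)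
        atTop (𝓝 0) := by
  classical
  intro s hs
  set E : Set Ω := X 0 ⁻¹' {s} with hEdef
  have hmeasB : ∀ (B : Set ((Fin k → ℕ) × (Fin m → ℕ))) (n : ℕ), MeasurableSet (X n ⁻¹' B) :=
    fun B n => (hXmeas n) (aux_Smeas B)
  have hmeasE : MeasurableSet E := hmeasB {s} 0
  -- the "good at time u" events and their intersections
  set Gd : ℕ → Set Ω := fun u => X u ⁻¹' {v | ∀ r, N < v.2 r} with hGddef
  set A : ℕ → Set Ω := fun M => ⋂ u, ⋂ (_ : M ≤ u), Gd u with hAdef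
  set C : ℕ → ℕ → Set Ω := fun M n => E ∩ ⋂ u, ⋂ (_ : M ≤ u ∧ u ≤ M + n), Gd u with hCdef
  have hmeasGd : ∀ u, MeasurableSet (Gd u) := fun u => hmeasB _ u
  have hmeasA : ∀ M, MeasurableSet (A M) := fun M =>
    MeasurableSet.iInter fun u => MeasurableSet.iInter fun _ => hmeasGd u
  have hmeasC : ∀ M n, MeasurableSet (C M n) := fun M n =>
    hmeasE.inter (MeasurableSet.iInter fun u => MeasurableSet.iInter fun _ => hmeasGd u)
  set ν : ℕ → ℕ → (Fin k → ℕ) → ℝ≥0∞ :=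
    fun M n x => μ ({ω | (X (M + n) ω).1 = x} ∩ C M n) with hνdef
  have hg1meas : ∀ t (x : Fin k → ℕ), MeasurableSet {ω | (X t ω).1 = x} := by
    intro t x
    exact hmeasB {v | v.1 = x} t
  -- claim c1: one-step inequality for ν
  have c1 : ∀ M n j, ν M (n + 1) j ≤ ∑' x, ENNReal.ofReal (P x j) * ν M n x := by
    intro M n j
    have hCsub : C M (n + 1) ⊆ C M n := by
      apply Set.inter_subset_inter_right
      intro ω hω
      simp only [Set.mem_iInter] at hω ⊢
      intro u hu
      exact hω u ⟨hu.1, hu.2.trans (by omega)⟩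
    have h1le : ν M (n + 1) j ≤ μ ({ω | (X (M + n + 1) ω).1 = j} ∩ C M n) := by
      refine measure_mono ?_
      exact Set.inter_subset_inter (by rw [show M + (n + 1) = M + n + 1 by omega]) hCsub
    refine h1le.trans ?_
    set t := M + n with htdef
    have hpart : μ ({ω | (X (t + 1) ω).1 = j} ∩ C M n)
        = ∑' x, μ (({ω | (X (t + 1) ω).1 = j} ∩ C M n) ∩ (fun ω => (X t ω).1) ⁻¹' {x}) := by
      refine aux_partition μ ?_ ((hg1meas (t+1) j).inter (hmeasC M n))
      exact (hXmeas t).fst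
    rw [hpart]
    refine ENNReal.tsum_le_tsum fun x => ?_
    -- identify the set with a cylinder and apply aux_step
    set Aset : Set (Fin (t + 1) → (Fin k → ℕ) × (Fin m → ℕ)) :=
      {q | q 0 = s ∧ (∀ u : Fin (t + 1), M ≤ (u : ℕ) → ∀ r, N < (q u).2 r)
        ∧ (q (Fin.last t)).1 = x} with hAsetdef
    have hcyl : (fun ω (u : Fin (t + 1)) => X u ω) ⁻¹' Aset
        = C M n ∩ (fun ω => (X t ω).1) ⁻¹' {x} := by
      ext ω
      simp only [Set.mem_preimage, Set.mem_setOf_eq, hAsetdef, Set.mem_inter_iff, hCdef,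
        Set.mem_iInter, Set.mem_singleton_iff, hEdef, hGddef, Fin.val_last]
      constructor
      · rintro ⟨h0, hmid, hlast⟩
        refine ⟨⟨h0, fun u hu => ?_⟩, hlast⟩
        have := hmid ⟨u, by omega⟩ hu.1
        simpa using this
      · rintro ⟨⟨h0, hmid⟩, hlast⟩
        refine ⟨h0, fun u hu => ?_, hlast⟩
        have := hmid u ⟨hu, by omega⟩
        simpa using this
    have hstep := aux_step μ X Q hXmeas hQ.1 hmc N P hP.1 h2 t x j Aset ?_
    · rw [hcyl] at hstep
      have : ({ω | (X (t + 1) ω).1 = j} ∩ C M n) ∩ (fun ω => (X t ω).1) ⁻¹' {x}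
          = (C M n ∩ (fun ω => (X t ω).1) ⁻¹' {x}) ∩ {ω | (X (t + 1) ω).1 = j} := by
        ext ω
        simp only [Set.mem_inter_iff]
        tauto
      rw [this, hstep]
      refine mul_le_mul_right (measure_mono ?_) _
      exact fun ω hω => ⟨hω.2, hω.1⟩
    · rintro q ⟨-, hmid, hlast⟩
      refine ⟨hlast, ?_⟩
      have := hmid (Fin.last t) (by simp [Fin.val_last]; omega)
      simpa using this
  -- claim c2: n-step inequality for ν
  have c2 : ∀ M n x, ν M n x
      ≤ ∑' i, ν M 0 i * ematPow (fun a b => ENNReal.ofReal (P a b)) n i x := by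
    intro M n
    induction n with
    | zero =>
      intro x
      have : ∀ i, ν M 0 i * ematPow (fun a b => ENNReal.ofReal (P a b)) 0 i x
          = if i = x then ν M 0 x else 0 := by
        intro i
        by_cases h : i = x <;> simp [ematPow, h]
      rw [tsum_congr this, tsum_ite_eq]
    | succ n ih =>
      intro j
      refine (c1 M n j).trans ?_
      calc ∑' x, ENNReal.ofReal (P x j) * ν M n x
          ≤ ∑' x, ENNReal.ofReal (P x j)
            * ∑' i, ν M 0 i * ematPow (fun a b => ENNReal.ofReal (P a b)) n i x :=
            ENNReal.tsum_le_tsum fun x => mul_le_mul_right (ih x) _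
        _ = ∑' x, ∑' i, (ν M 0 i * ematPow (fun a b => ENNReal.ofReal (P a b)) n i x)
            * ENNReal.ofReal (P x j) := by
            refine tsum_congr fun x => ?_
            rw [mul_comm, ENNReal.tsum_mul_right]
        _ = ∑' i, ∑' x, ν M 0 i
            * (ematPow (fun a b => ENNReal.ofReal (P a b)) n i x * ENNReal.ofReal (P x j)) := by
            rw [ENNReal.tsum_comm]
            exact tsum_congr fun i => tsum_congr fun x => by ring
        _ = ∑' i, ν M 0 i * ∑' x, ematPow (fun a b => ENNReal.ofReal (P a b)) n i x
            * ENNReal.ofReal (P x j) := by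
            exact tsum_congr fun i => ENNReal.tsum_mul_left
        _ = ∑' i, ν M 0 i * ematPow (fun a b => ENNReal.ofReal (P a b)) (n + 1) i j := by
            exact tsum_congr fun i => by rw [show ematPow (fun a b => ENNReal.ofReal (P a b)) (n+1) i j = ∑' x, ematPow (fun a b => ENNReal.ofReal (P a b)) n i x * ENNReal.ofReal (P x j) from rfl]
  -- claim c3: total mass of ν
  have c3 : ∀ M n, ∑' j, ν M n j = μ (C M n) := by
    intro M n
    rw [aux_partition μ (hXmeas (M + n)).fst (hmeasC M n)]
    exact tsum_congr fun j => by rw [Set.inter_comm]; rfl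
  -- claim c4: mass lower bound via the tail event
  have c4 : ∀ M n, μ E ≤ μ (C M n) + μ (E ∩ (A M)ᶜ) := by
    intro M n
    refine le_trans (measure_mono ?_) (measure_union_le _ _)
    intro ω hω
    by_cases hA' : ω ∈ A M
    · left
      refine ⟨hω, ?_⟩
      simp only [hAdef, Set.mem_iInter] at hA'
      simp only [Set.mem_iInter]
      exact fun u hu => hA' u hu.1
    · right; exact ⟨hω, hA'⟩
  -- claim c5: the tail event becomes negligible
  have c5 : Tendsto (fun M => μ (E ∩ (A M)ᶜ)) atTop (𝓝 0) := by
    have hanti : Antitone (fun M => E ∩ (A M)ᶜ) := by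
      intro M M' hMM'
      apply Set.inter_subset_inter_right
      apply Set.compl_subset_compl.2
      intro ω hω
      simp only [hAdef, Set.mem_iInter] at hω ⊢
      exact fun u hu => hω u (hMM'.trans hu)
    have hlim := tendsto_measure_iInter_atTop
      (fun M => (hmeasE.inter (hmeasA M).compl).nullMeasurableSet) hanti
      ⟨0, measure_ne_top μ _⟩
    have hzero : μ (⋂ M, E ∩ (A M)ᶜ) = 0 := by
      refine measure_mono_null ?_ (h1 s hs)
      intro ω hω
      simp only [Set.mem_iInter] at hω
      have hωE : ω ∈ E := (hω 0).1
      refine ⟨?_, hωE⟩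
      intro hall
      have hev : ∀ᶠ u in atTop, ∀ r, N < (X u ω).2 r := by
        rw [eventually_all]
        intro r
        exact (hall r).eventually_gt_atTop N
      obtain ⟨M, hM⟩ := eventually_atTop.1 hev
      have : ω ∈ A M := by
        simp only [hAdef, Set.mem_iInter]
        intro u hu
        exact fun r => hM u hu r
      exact (hω M).2 this
    rw [hzero] at hlim
    exact hlim

  -- final analysis
  have hals : {ω | X 0 ω = s} = E := rfl
  set c : ℝ≥0∞ := μ E with hcdef
  have hc0 : c ≠ 0 := by rw [hcdef, ← hals]; exact hs.ne'
  have hctop : c ≠ ⊤ := measure_ne_top μ E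
  set cr : ℝ := c.toReal with hcrdef
  have hcr : 0 < cr := ENNReal.toReal_pos hc0 hctop
  have hcr1 : cr ≤ 1 := by
    rw [hcrdef, hcdef]
    calc (μ E).toReal ≤ (1 : ℝ≥0∞).toReal := ENNReal.toReal_mono ENNReal.one_ne_top prob_le_one
      _ = 1 := by simp
  have hππ : ∀ j, π j ≤ 1 := by
    intro j
    have h := Summable.le_tsum hπ.2.summable j (fun i _ => hπ.1 i)
    rwa [hπ.2.tsum_eq] at h
  have hBdd : ∀ i n, BddAbove (Set.range fun j => |matPow P n i j - π j|) := by
    intro i n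
    refine ⟨2, ?_⟩
    rintro x ⟨j, rfl⟩
    have h1' := aux_matPow_le_one hP n i j
    have h2' := aux_matPow_nonneg hP n i j
    have h3' := hπ.1 j; have h4' := hππ j
    rw [abs_le]; constructor <;> nlinarith
  have habs2 : ∀ n i j, |matPow P n i j - π j| ≤ 2 := by
    intro n i j
    have h1' := aux_matPow_le_one hP n i j
    have h2' := aux_matPow_nonneg hP n i j
    have h3' := hπ.1 j; have h4' := hππ j
    rw [abs_le]; constructor <;> nlinarith
  rw [Metric.tendsto_atTop]
  intro ε hε
  set δ : ℝ := ε * cr / 20 with hδdef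
  have hδpos : 0 < δ := by positivity
  obtain ⟨M, hM⟩ := (ENNReal.tendsto_atTop_zero.1 c5) (ENNReal.ofReal δ)
    (ENNReal.ofReal_pos.2 hδpos)
  set η : ℝ := (μ (E ∩ (A M)ᶜ)).toReal with hηdef
  have hη : η ≤ δ := ENNReal.toReal_le_of_le_ofReal hδpos.le (hM M le_rfl)
  set v : (Fin k → ℕ) → ℝ := fun i => (ν M 0 i).toReal with hvdef
  have hνfin : ∀ n x, ν M n x ≠ ⊤ := fun n x => measure_ne_top μ _
  have hv0 : ∀ i, 0 ≤ v i := fun i => ENNReal.toReal_nonneg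
  have hv_summ : Summable v := by
    apply ENNReal.summable_toReal
    rw [c3 M 0]; exact measure_ne_top μ _
  have htsv : ∑' i, v i = (μ (C M 0)).toReal := by
    rw [hvdef, ← ENNReal.tsum_toReal_eq (fun i => hνfin 0 i), c3 M 0]
  have hCME : ∀ n, C M n ⊆ E := fun n => Set.inter_subset_left
  have hswr_le : ∀ n, (μ (C M n)).toReal ≤ cr :=
    fun n => ENNReal.toReal_mono hctop (measure_mono (hCME n))
  have hswr_ge : ∀ n, cr ≤ (μ (C M n)).toReal + η := by
    intro n
    have h' : (μ E).toReal ≤ (μ (C M n) + μ (E ∩ (A M)ᶜ)).toReal :=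
      ENNReal.toReal_mono (by finiteness) (c4 M n)
    rwa [ENNReal.toReal_add (measure_ne_top μ _) (measure_ne_top μ _)] at h'
  have htsv1 : ∑' i, v i ≤ 1 := by rw [htsv]; linarith [hswr_le 0, hcr1]
  obtain ⟨F, hF⟩ : ∃ F : Finset (Fin k → ℕ), (∑' i, v i) - δ < ∑ i ∈ F, v i := by
    have h := hv_summ.hasSum.eventually
      (eventually_gt_nhds (by linarith : (∑' i, v i) - δ < ∑' i, v i))
    exact h.exists
  have htail : ∑' i : ((F : Set (Fin k → ℕ))ᶜ : Set (Fin k → ℕ)), v i ≤ δ := by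
    have hsplit := Summable.sum_add_tsum_compl (s := F) hv_summ
    linarith
  have hErgev : ∀ᶠ n in atTop, ∀ i ∈ F, ∀ j, |matPow P n i j - π j| ≤ δ := by
    rw [eventually_all_finset]
    intro i hi
    have h := (hErg i).eventually_lt_const hδpos
    filter_upwards [h] with n hn j
    exact le_of_lt (lt_of_le_of_lt (le_ciSup (hBdd i n) j) hn)
  obtain ⟨n₀, hn₀⟩ := eventually_atTop.1 hErgev
  refine ⟨M + n₀, fun t ht => ?_⟩
  obtain ⟨n, rfl⟩ : ∃ n, t = M + n := ⟨t - M, by omega⟩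
  have hnn₀ : n₀ ≤ n := by omega
  -- notation for this fixed time
  set a : (Fin k → ℕ) → ℝ := fun j' => (ν M n j').toReal with hadef
  set f : (Fin k → ℕ) → ℝ := fun j' => (μ {ω | (X (M + n) ω).1 = j' ∧ X 0 ω = s}).toReal
    with hfdef
  have hfset : ∀ j', {ω | (X (M + n) ω).1 = j' ∧ X 0 ω = s}
      = {ω | (X (M + n) ω).1 = j'} ∩ E := fun j' => rfl
  have hfpart : ∑' j', μ {ω | (X (M + n) ω).1 = j' ∧ X 0 ω = s} = c := by
    rw [hcdef, aux_partition μ (hXmeas (M + n)).fst hmeasE]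
    exact tsum_congr fun j' => by rw [hfset j', Set.inter_comm]; rfl
  have hf_summ : Summable f :=
    ENNReal.summable_toReal (by rw [hfpart]; exact hctop)
  have hfsum : ∑' j', f j' = cr := by
    rw [hfdef, ← ENNReal.tsum_toReal_eq (fun j' => measure_ne_top μ _), hfpart]
  have ha_summ : Summable a :=
    ENNReal.summable_toReal (by rw [c3 M n]; exact measure_ne_top μ _)
  have hsa : ∑' j', a j' = (μ (C M n)).toReal := by
    rw [hadef, ← ENNReal.tsum_toReal_eq (hνfin n), c3 M n]
  have ha_le_f : ∀ j', a j' ≤ f j' := by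
    intro j'
    refine ENNReal.toReal_mono (measure_ne_top μ _) (measure_mono ?_)
    rw [hfset j']
    exact Set.inter_subset_inter_right _ (hCME n)
  have hfa : ∀ j', f j' - a j' ≤ η := by
    intro j'
    have hsub : Summable (fun j'' => f j'' - a j'') := hf_summ.sub ha_summ
    have hts : ∑' j'', (f j'' - a j'') = cr - (μ (C M n)).toReal := by
      rw [Summable.tsum_sub hf_summ ha_summ, hfsum, hsa]
    have hterm := Summable.le_tsum hsub j' (fun i _ => sub_nonneg.2 (ha_le_f i))
    rw [hts] at hterm
    linarith [hswr_ge n]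
  -- the comparison vector
  set w : (Fin k → ℕ) → ℝ≥0∞ :=
    fun j' => ∑' i, ν M 0 i * ematPow (fun x y => ENNReal.ofReal (P x y)) n i j' with hwdef
  have hw_le : ∀ j', w j' ≤ μ (C M 0) := by
    intro j'
    rw [hwdef, ← c3 M 0]
    refine ENNReal.tsum_le_tsum fun i => ?_
    calc ν M 0 i * ematPow (fun x y => ENNReal.ofReal (P x y)) n i j'
        ≤ ν M 0 i * 1 := mul_le_mul_right (aux_ematPow_le_one hP n i j') _
      _ = ν M 0 i := mul_one _
  have hw_fin : ∀ j', w j' ≠ ⊤ :=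
    fun j' => ne_top_of_le_ne_top (measure_ne_top μ _) (hw_le j')
  have hsw : ∑' j', w j' = μ (C M 0) := by
    rw [hwdef, ENNReal.tsum_comm]
    calc ∑' i, ∑' j', ν M 0 i * ematPow (fun x y => ENNReal.ofReal (P x y)) n i j'
        = ∑' i, ν M 0 i * ∑' j', ematPow (fun x y => ENNReal.ofReal (P x y)) n i j' :=
          tsum_congr fun i => ENNReal.tsum_mul_left
      _ = ∑' i, ν M 0 i := by
          refine tsum_congr fun i => ?_
          rw [aux_ematPow_row hP n i, mul_one]
      _ = μ (C M 0) := c3 M 0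
  set b : (Fin k → ℕ) → ℝ := fun j' => (w j').toReal with hbdef
  have hb_eq : ∀ j', b j' = ∑' i, v i * matPow P n i j' := by
    intro j'
    show (∑' i, ν M 0 i * ematPow (fun x y => ENNReal.ofReal (P x y)) n i j').toReal
      = ∑' i, v i * matPow P n i j'
    rw [ENNReal.tsum_toReal_eq (fun i => ENNReal.mul_ne_top (hνfin 0 i)
      (ne_top_of_le_ne_top ENNReal.one_ne_top (aux_ematPow_le_one hP n i j')))]
    exact tsum_congr fun i => by rw [ENNReal.toReal_mul, aux_bridge hP]
  have hb_summ : Summable b :=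
    ENNReal.summable_toReal (by rw [hsw]; exact measure_ne_top μ _)
  have hsb : ∑' j', b j' = (μ (C M 0)).toReal := by
    rw [hbdef, ← ENNReal.tsum_toReal_eq hw_fin, hsw]
  have ha_le_b : ∀ j', a j' ≤ b j' :=
    fun j' => ENNReal.toReal_mono (hw_fin j') (c2 M n j')
  have hba : ∀ j', b j' - a j' ≤ η := by
    intro j'
    have hsub : Summable (fun j'' => b j'' - a j'') := hb_summ.sub ha_summ
    have hts : ∑' j'', (b j'' - a j'') = (μ (C M 0)).toReal - (μ (C M n)).toReal := by
      rw [Summable.tsum_sub hb_summ ha_summ, hsb, hsa]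
    have hterm := Summable.le_tsum hsub j' (fun i _ => sub_nonneg.2 (ha_le_b i))
    rw [hts] at hterm
    linarith [hswr_le 0, hswr_ge n]
  -- deviation of b from the stationary distribution
  have hbπ : ∀ j', |b j' - (∑' i, v i) * π j'| ≤ 3 * δ := by
    intro j'
    have hsummb : Summable (fun i => v i * matPow P n i j') := by
      refine Summable.of_nonneg_of_le (fun i => mul_nonneg (hv0 i) (aux_matPow_nonneg hP n i j'))
        (fun i => ?_) hv_summ
      calc v i * matPow P n i j' ≤ v i * 1 :=
            mul_le_mul_of_nonneg_left (aux_matPow_le_one hP n i j') (hv0 i)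
        _ = v i := mul_one _
    have hsummπ : Summable (fun i => v i * π j') := hv_summ.mul_right _
    have hdiff : b j' - (∑' i, v i) * π j' = ∑' i, v i * (matPow P n i j' - π j') := by
      rw [hb_eq j', ← tsum_mul_right, ← Summable.tsum_sub hsummb hsummπ]
      exact tsum_congr fun i => by ring
    have hsummabs : Summable (fun i => v i * |matPow P n i j' - π j'|) := by
      refine Summable.of_nonneg_of_le (fun i => mul_nonneg (hv0 i) (abs_nonneg _))
        (fun i => ?_) (hv_summ.mul_left 2)
      calc v i * |matPow P n i j' - π j'| ≤ v i * 2 :=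
            mul_le_mul_of_nonneg_left (habs2 n i j') (hv0 i)
        _ = 2 * v i := by ring
    have habs : |∑' i, v i * (matPow P n i j' - π j')|
        ≤ ∑' i, v i * |matPow P n i j' - π j'| := by
      have hn := norm_tsum_le_tsum_norm (f := fun i => v i * (matPow P n i j' - π j')) (by
        simpa only [Real.norm_eq_abs, abs_mul, abs_of_nonneg (hv0 _)] using hsummabs)
      simpa only [Real.norm_eq_abs, abs_mul, abs_of_nonneg (hv0 _)] using hn
    rw [hdiff]
    refine habs.trans ?_
    have hsplit := Summable.sum_add_tsum_compl (s := F) hsummabs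
    have hFbound : ∑ i ∈ F, v i * |matPow P n i j' - π j'| ≤ δ := by
      calc ∑ i ∈ F, v i * |matPow P n i j' - π j'|
          ≤ ∑ i ∈ F, v i * δ := by
            refine Finset.sum_le_sum fun i hi => ?_
            exact mul_le_mul_of_nonneg_left (hn₀ n hnn₀ i hi j') (hv0 i)
        _ = (∑ i ∈ F, v i) * δ := by rw [← Finset.sum_mul]
        _ ≤ 1 * δ := by
            refine mul_le_mul_of_nonneg_right ?_ hδpos.le
            exact le_trans (Summable.sum_le_tsum F (fun i _ => hv0 i) hv_summ) htsv1
        _ = δ := one_mul _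
    have hcompl : ∑' i : ((F : Set (Fin k → ℕ))ᶜ : Set (Fin k → ℕ)),
        v i * |matPow P n i j' - π j'| ≤ 2 * δ := by
      calc ∑' i : ((F : Set (Fin k → ℕ))ᶜ : Set (Fin k → ℕ)), v i * |matPow P n i j' - π j'|
          ≤ ∑' i : ((F : Set (Fin k → ℕ))ᶜ : Set (Fin k → ℕ)), 2 * v (i : Fin k → ℕ) := by
            refine Summable.tsum_le_tsum (fun i => ?_) (hsummabs.subtype _) ((hv_summ.mul_left 2).subtype _)
            calc v (i : Fin k → ℕ) * |matPow P n i j' - π j'| ≤ v (i : Fin k → ℕ) * 2 :=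
                  mul_le_mul_of_nonneg_left (habs2 n i j') (hv0 _)
              _ = 2 * v (i : Fin k → ℕ) := by ring
        _ = 2 * ∑' i : ((F : Set (Fin k → ℕ))ᶜ : Set (Fin k → ℕ)), v (i : Fin k → ℕ) := by
            rw [tsum_mul_left]
        _ ≤ 2 * δ := by linarith [htail]
    linarith
  have hc0cr : |(∑' i, v i) - cr| ≤ δ := by
    rw [htsv, abs_le]
    constructor
    · linarith [hswr_le 0, hswr_ge 0, hη, hδpos]
    · linarith [hswr_le 0, hswr_ge 0, hη, hδpos]
  -- per-j bound
  have key : ∀ j', |f j' / cr - π j'| ≤ 6 * δ / cr := by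
    intro j'
    have hdec : f j' - cr * π j' = (f j' - a j') - (b j' - a j')
        + (b j' - (∑' i, v i) * π j') + ((∑' i, v i) - cr) * π j' := by ring
    have hx1 : |f j' - a j'| ≤ δ := by
      rw [abs_of_nonneg (sub_nonneg.2 (ha_le_f j'))]
      linarith [hfa j']
    have hx2 : |b j' - a j'| ≤ δ := by
      rw [abs_of_nonneg (sub_nonneg.2 (ha_le_b j'))]
      linarith [hba j']
    have hx4 : |((∑' i, v i) - cr) * π j'| ≤ δ := by
      rw [abs_mul, abs_of_nonneg (hπ.1 j')]
      calc |(∑' i, v i) - cr| * π j' ≤ δ * 1 :=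
            mul_le_mul (hc0cr) (hππ j') (hπ.1 j') hδpos.le
        _ = δ := mul_one _
    have hx3 := hbπ j'
    have htot : |f j' - cr * π j'| ≤ 6 * δ := by
      rw [abs_le] at hx1 hx2 hx3 hx4 ⊢
      constructor <;> linarith [hdec]
    have heq : f j' / cr - π j' = (f j' - cr * π j') / cr := by
      field_simp
    rw [heq, abs_div, abs_of_pos hcr]
    exact (div_le_div_iff_of_pos_right hcr).2 htot
  -- conclude
  have hsup_le : (⨆ j', |f j' / cr - π j'|) ≤ 6 * δ / cr := ciSup_le key
  have hsup_nonneg : 0 ≤ ⨆ j', |f j' / cr - π j'| :=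
    Real.iSup_nonneg fun j' => abs_nonneg _
  have hgoal_eq : (⨆ j' : Fin k → ℕ,
      |(μ {ω | (X (M + n) ω).1 = j' ∧ X 0 ω = s}).toReal / (μ {ω | X 0 ω = s}).toReal - π j'|)
      = ⨆ j', |f j' / cr - π j'| := rfl
  rw [Real.dist_eq, sub_zero, hgoal_eq, abs_of_nonneg hsup_nonneg]
  refine lt_of_le_of_lt hsup_le ?_
  rw [hδdef]
  have hcalc : 6 * (ε * cr / 20) / cr = 6 / 20 * ε := by
    field_simp
  rw [hcalc]
  linarith
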